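/- arXiv:2406.14125 — 2 statements merged into one kernel-verified Lean document; each statement's English description precedes it below -/
import Mathlib

section
/- Let t ≥ 1 and n ≥ 2t+2 be integers, and let x and x' be two distinct binary words of length n. Suppose D and D' are sets of deletion vectors for length-n words, each vector of weight exactly t, with |D| = |D'| = N, such that the output set of D on x equals the output set of D' on x'. Then N ≤ C(n,t) − C(⌈n/2⌉ − 1, t). (Equivalently, if N ≥ C(n,t) − C(⌈n/2⌉−1,t) + 1 distinct deletion vectors of weight exactly t are applied, the set of output words uniquely determines the transmitted binary word.) -/
/-!
A word `y` that is a subword of every output `del(x, S)`, `S ∈ D`, bounds `D`: if some subword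
`w` of `x` is not a subword of `y`, then no deletion vector avoiding the `|w|` positions of `w`
lies in `D`, so `|D| ≤ C(n,t) - C(n - |w|, t)`. Here every output of `D` on `x` is also an output
of `D'` on `x'`, hence a subword of `x'`, and symmetrically. So it suffices to find subwords `w`
of `x` and `v` of `x'`, each absent from the other word, with `|w| + |v| ≤ n + 2`. If the two
words have different letter counts, say `x` has more `c`s, take `w = c^(#c x' + 1)` and
`v = d^(#d x + 1)`. Otherwise write `x = u c r`, `x' = u d r'` with `c ≠ d`; equal counts force
`#d r = #d r' + 1`, so `w = c^(#c u + 1) d^(#d r)` works, and symmetrically for `v`.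
-/

/-- Applying a deletion vector `S` (a set of coordinate positions) to a word
`x` of length `n`: delete the entries at positions in `S`, keeping the rest in order. -/
def delWord {q n : ℕ} (x : Fin n → Fin q) (S : Finset (Fin n)) : List (Fin q) :=
  ((Finset.univ \ S).sort (· ≤ ·)).map x

open List

namespace List

variable {α : Type*} [DecidableEq α]

theorem exists_append_cons_of_ne {l l' : List α} (hlen : l.length = l'.length) (hne : l ≠ l') :
    ∃ u c r d r', c ≠ d ∧ l = u ++ c :: r ∧ l' = u ++ d :: r' := by
  induction l generalizing l' with
  | nil => cases l' <;> simp_all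
  | cons a l ih =>
    obtain _ | ⟨b, l'⟩ := l'
    · simp at hlen
    by_cases hab : a = b
    · subst hab
      obtain ⟨u, c, r, d, r', hcd, rfl, rfl⟩ := ih (by simpa using hlen) (by simpa using hne)
      exact ⟨a :: u, c, r, d, r', hcd, rfl, rfl⟩
    · exact ⟨[], a, l, b, l', hab, rfl, rfl⟩

theorem replicate_append_replicate_not_sublist {c d : α} {l₁ l₂ : List α} {a b : ℕ}
    (h₁ : l₁.count c < a) (h₂ : l₂.count d < b) :
    ¬ replicate a c ++ replicate b d <+ l₁ ++ l₂ := by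
  intro h
  obtain ⟨q₁, q₂, heq, hq₁, hq₂⟩ := sublist_append_iff.1 h
  rcases append_eq_append_iff.1 heq.symm with ⟨s, -, rfl⟩ | ⟨s, rfl, -⟩
  · have := replicate_sublist_iff.1 ((sublist_append_right s _).trans hq₂)
    omega
  · have := replicate_sublist_iff.1 ((sublist_append_left _ s).trans hq₁)
    omega

theorem count_add_count_of_ne {c d : Fin 2} (hcd : c ≠ d) (l : List (Fin 2)) :
    l.count c + l.count d = l.length := by
  rw [length_eq_countP_add_countP (· == c)]
  congr 1
  apply countP_congr
  intro a _
  fin_cases a <;> fin_cases c <;> fin_cases d <;> simp_all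

def Distinguishes (w l l' : List α) : Prop := w <+ l ∧ ¬ w <+ l'

theorem distinguishes_replicate_of_count_lt {c : α} {l l' : List α} (h : l'.count c < l.count c) :
    Distinguishes (replicate (l'.count c + 1) c) l l' :=
  ⟨replicate_sublist_iff.2 h, fun h' => (replicate_sublist_iff.1 h').not_gt (Nat.lt_succ_self _)⟩

theorem distinguishes_replicate_append_replicate {u r r' : List α} {c d : α} (hcd : c ≠ d)
    (hr : r'.count d < r.count d) :
    Distinguishes (replicate (u.count c + 1) c ++ replicate (r.count d) d)
      (u ++ c :: r) (u ++ d :: r') := by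
  rw [← singleton_append, ← append_assoc, ← singleton_append (l := r'), ← append_assoc]
  refine ⟨(replicate_sublist_iff.2 (by simp)).append (replicate_sublist_iff.2 le_rfl),
    replicate_append_replicate_not_sublist (by simp [hcd.symm]) hr⟩

theorem exists_distinguishes_pair_of_ne {l l' : List (Fin 2)} (hlen : l.length = l'.length)
    (hne : l ≠ l') :
    ∃ w v, Distinguishes w l l' ∧ Distinguishes v l' l ∧ w.length + v.length ≤ l.length + 2 := by
  by_cases hperm : l ~ l'
  · obtain ⟨u, c, r, d, r', hcd, rfl, rfl⟩ := exists_append_cons_of_ne hlen hne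
    have hc := perm_iff_count.1 hperm c
    have hd := perm_iff_count.1 hperm d
    simp only [count_append, count_cons_self, count_cons_of_ne hcd, count_cons_of_ne hcd.symm,
      Nat.add_left_cancel_iff] at hc hd
    refine ⟨_, _, distinguishes_replicate_append_replicate hcd (by omega),
      distinguishes_replicate_append_replicate hcd.symm (by omega), ?_⟩
    have := count_add_count_of_ne hcd u
    have := count_add_count_of_ne hcd r
    simp only [length_append, length_replicate, length_cons]
    omega
  · obtain ⟨c, d, hcd, hc⟩ : ∃ c d : Fin 2, c ≠ d ∧ l'.count c < l.count c := by
      have := count_add_count_of_ne (zero_ne_one (α := Fin 2)) l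
      have := count_add_count_of_ne (zero_ne_one (α := Fin 2)) l'
      rcases lt_trichotomy (l'.count 0) (l.count 0) with h | h | h
      · exact ⟨0, 1, zero_ne_one, h⟩
      · exact absurd (perm_iff_count.2 (Fin.forall_fin_two.2 ⟨h.symm, by omega⟩)) hperm
      · exact ⟨1, 0, one_ne_zero, by omega⟩
    have := count_add_count_of_ne hcd l
    have := count_add_count_of_ne hcd l'
    refine ⟨_, _, distinguishes_replicate_of_count_lt hc,
      distinguishes_replicate_of_count_lt (c := d) (by omega), ?_⟩
    simp only [length_replicate]
    omega

end List

section DeletionVectors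

variable {q n : ℕ}

theorem delWord_sublist_delWord (x : Fin n → Fin q) {S T : Finset (Fin n)} (h : S ⊆ T) :
    delWord x T <+ delWord x S := by
  refine Sublist.map x (sublist_of_subperm_of_pairwise ?_ (Finset.pairwise_sort _ _)
    (Finset.pairwise_sort _ _))
  rw [← Multiset.coe_le, Finset.sort_eq, Finset.sort_eq]
  exact Finset.val_le_iff.2 (Finset.sdiff_subset_sdiff le_rfl h)

theorem delWord_empty (x : Fin n → Fin q) : delWord x ∅ = ofFn x := by
  rw [delWord, Finset.sdiff_empty, Fin.sort_univ, ofFn_eq_map]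

theorem delWord_sublist_ofFn (x : Fin n → Fin q) (S : Finset (Fin n)) :
    delWord x S <+ ofFn x :=
  delWord_empty x ▸ delWord_sublist_delWord x S.empty_subset

theorem exists_delWord_eq_of_sublist {x : Fin n → Fin q} {w : List (Fin q)} (hw : w <+ ofFn x) :
    ∃ T : Finset (Fin n), delWord x T = w ∧ T.card = n - w.length := by
  rw [ofFn_eq_map] at hw
  obtain ⟨l, hl, rfl⟩ := sublist_map_iff.1 hw
  have hnodup : l.Nodup := hl.nodup (nodup_finRange n)
  refine ⟨l.toFinsetᶜ, ?_, ?_⟩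
  · rw [delWord, ← Finset.compl_eq_univ_sdiff, compl_compl,
      (toFinset_sort _ hnodup).2 ((pairwise_le_finRange n).sublist hl)]
  · rw [Finset.card_compl, toFinset_card_of_nodup hnodup, length_map, Fintype.card_fin]

theorem card_add_choose_le_of_not_sublist {x : Fin n → Fin q} {y : List (Fin q)}
    {T : Finset (Fin n)} (hT : ¬ delWord x T <+ y) {t : ℕ} {D : Finset (Finset (Fin n))}
    (hD : ∀ S ∈ D, S.card = t) (hDy : ∀ S ∈ D, delWord x S <+ y) :
    D.card + T.card.choose t ≤ n.choose t := by
  have hdisj : Disjoint D (T.powersetCard t) := Finset.disjoint_left.2 fun S hS hST =>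
    hT ((delWord_sublist_delWord x (Finset.mem_powersetCard.1 hST).1).trans (hDy S hS))
  have hsub : D ∪ T.powersetCard t ⊆ Finset.univ.powersetCard t := by
    intro S hS
    rcases Finset.mem_union.1 hS with hS | hS
    · exact Finset.mem_powersetCard.2 ⟨Finset.subset_univ S, hD S hS⟩
    · exact Finset.powersetCard_mono (Finset.subset_univ T) hS
  simpa [Finset.card_union_of_disjoint hdisj] using Finset.card_le_card hsub

theorem card_add_choose_le_of_distinguishes {x : Fin n → Fin q} {w y : List (Fin q)}
    (hw : Distinguishes w (ofFn x) y) {t : ℕ} {D : Finset (Finset (Fin n))}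
    (hD : ∀ S ∈ D, S.card = t) (hDy : ∀ S ∈ D, delWord x S <+ y) :
    D.card + (n - w.length).choose t ≤ n.choose t := by
  obtain ⟨T, rfl, hT⟩ := exists_delWord_eq_of_sublist hw.1
  rw [← hT]
  exact card_add_choose_le_of_not_sublist hw.2 hD hDy

theorem delWord_sublist_ofFn_of_image_eq {x x' : Fin n → Fin q} {D D' : Finset (Finset (Fin n))}
    (hout : D.image (delWord x) = D'.image (delWord x')) {S : Finset (Fin n)} (hS : S ∈ D) :
    delWord x S <+ ofFn x' := by
  obtain ⟨S', -, hS'⟩ := Finset.mem_image.1 (hout ▸ Finset.mem_image_of_mem (delWord x) hS)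
  exact hS' ▸ delWord_sublist_ofFn x' S'

end DeletionVectors

theorem deletion_vectors_exactly_t_uniqueness_general
    (t n : ℕ)
    (x x' : Fin n → Fin 2) (hne : x ≠ x')
    (N : ℕ) (D D' : Finset (Finset (Fin n)))
    (hD : ∀ S ∈ D, S.card = t) (hD' : ∀ S ∈ D', S.card = t)
    (hDcard : D.card = N) (hD'card : D'.card = N)
    (hout : D.image (delWord x) = D'.image (delWord x')) :
    N ≤ n.choose t - ((n + 1) / 2 - 1).choose t := by
  obtain ⟨w, v, hw, hv, hlen⟩ := exists_distinguishes_pair_of_ne (by simp) (ofFn_injective.ne hne)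
  have hN := card_add_choose_le_of_distinguishes hw hD
    (fun _ ↦ delWord_sublist_ofFn_of_image_eq hout)
  have hN' := card_add_choose_le_of_distinguishes hv hD'
    (fun _ ↦ delWord_sublist_ofFn_of_image_eq hout.symm)
  rw [length_ofFn] at hlen
  rcases (by omega : (n + 1) / 2 - 1 ≤ n - w.length ∨ (n + 1) / 2 - 1 ≤ n - v.length)
    with hle | hle <;>
  · have := Nat.choose_le_choose t hle
    omega

theorem deletion_vectors_exactly_t_uniqueness
    (t n : ℕ) (ht : 1 ≤ t) (hn : 2 * t + 2 ≤ n)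
    (x x' : Fin n → Fin 2) (hne : x ≠ x')
    (N : ℕ) (D D' : Finset (Finset (Fin n)))
    (hD : ∀ S ∈ D, S.card = t) (hD' : ∀ S ∈ D', S.card = t)
    (hDcard : D.card = N) (hD'card : D'.card = N)
    (hout : D.image (delWord x) = D'.image (delWord x')) :
    N ≤ n.choose t - ((n + 1) / 2 - 1).choose t :=
  deletion_vectors_exactly_t_uniqueness_general t n x x' hne N D D' hD hD' hDcard hD'card hout
end

section
/- Let t ≥ 1 and n ≥ 2t+2 be integers, and consider the binary words x = 0^{⌈n/2⌉−1} 1 0^{⌊n/2⌋} and x' = 0^{⌈n/2⌉} 1 0^{⌊n/2⌋−1} of length n. Then there exist sets D and D' of deletion vectors for length-n words, each vector of weight at most t, with |D| = |D'| = V_2(n,t) − V_2(⌈n/2⌉−1, t), such that the output set of D on x equals the output set of D' on x'. In particular, the bound of the uniqueness theorem for deletion vectors of weight at most t is tight. -/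
/-- Binary Hamming ball volume `V₂(n,t) = ∑_{i=0}^{t} C(n,i)`. -/
def V₂ (n t : ℕ) : ℕ := ∑ i ∈ Finset.range (t + 1), n.choose i

open Finset

theorem Finset.sort_eq_sort_filter_lt_append {α : Type*} [LinearOrder α] {s : Finset α} {a : α}
    (ha : a ∈ s) :
    s.sort (· ≤ ·) = {x ∈ s | x < a}.sort (· ≤ ·) ++ a :: {x ∈ s | a < x}.sort (· ≤ ·) := by
  refine s.sortedLT_sort.eq_of_mem_iff ?_ fun x => ?_
  · rw [List.sortedLT_iff_pairwise, List.pairwise_append, List.pairwise_cons]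
    refine ⟨(sortedLT_sort _).pairwise, ⟨?_, (sortedLT_sort _).pairwise⟩, ?_⟩
    · simp
    · simp only [mem_sort, mem_filter, List.mem_cons]
      rintro x ⟨-, hx⟩ y (rfl | ⟨-, hy⟩)
      exacts [hx, hx.trans hy]
  · simp only [mem_sort, List.mem_append, mem_filter, List.mem_cons]
    grind

theorem Finset.card_eq_card_inter_Iio_add_card_inter_Ioi {α : Type*} [LinearOrder α]
    [LocallyFiniteOrderBot α] [LocallyFiniteOrderTop α] {s : Finset α} {a : α} (ha : a ∉ s) :
    #s = #(s ∩ Iio a) + #(s ∩ Ioi a) := by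
  rw [← card_union_of_disjoint (disjoint_left.2 fun x hx hx' => ?_)]
  · congr 1
    ext x
    simp only [mem_union, mem_inter, mem_Iio, mem_Ioi]
    grind
  · simp only [mem_inter, mem_Iio, mem_Ioi] at hx hx'
    exact hx.2.not_gt hx'.2

theorem Finset.card_filter_powerset_card_le {α : Type*} (B : Finset α) (t : ℕ) :
    #{S ∈ B.powerset | #S ≤ t} = V₂ #B t := by
  classical
  have h : {S ∈ B.powerset | #S ≤ t} = (range (t + 1)).biUnion (B.powersetCard ·) := by
    ext S
    simp only [mem_filter, mem_powerset, mem_biUnion, mem_range, mem_powersetCard]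
    constructor
    · rintro ⟨hSB, hS⟩
      exact ⟨#S, by omega, hSB, rfl⟩
    · rintro ⟨i, hi, hSB, rfl⟩
      exact ⟨hSB, by omega⟩
  rw [h, card_biUnion (B.pairwise_disjoint_powersetCard.set_pairwise _), V₂]
  simp [card_powersetCard]

section HittingSets

variable {α : Type*} [Fintype α] [DecidableEq α]

def hittingSets (A : Finset α) (t : ℕ) : Finset (Finset α) :=
  {S | #S ≤ t ∧ ¬Disjoint S A}

theorem mem_hittingSets {A S : Finset α} {t : ℕ} :
    S ∈ hittingSets A t ↔ #S ≤ t ∧ ∃ i ∈ S, i ∈ A := by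
  simp [hittingSets, not_disjoint_iff]

theorem card_hittingSets (A : Finset α) (t : ℕ) :
    #(hittingSets A t) = V₂ (Fintype.card α) t - V₂ (Fintype.card α - #A) t := by
  have h : hittingSets A t =
      {S ∈ (univ : Finset α).powerset | #S ≤ t} \ {S ∈ Aᶜ.powerset | #S ≤ t} := by
    ext S
    simp only [hittingSets, mem_filter, mem_sdiff, mem_powerset, subset_univ,
      subset_compl_iff_disjoint_right, mem_univ]
    tauto
  rw [h, card_sdiff_of_subset (filter_subset_filter _ (powerset_mono.2 (subset_univ Aᶜ))),
    card_filter_powerset_card_le, card_filter_powerset_card_le, card_univ, card_compl]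

end HittingSets

theorem delWord_eq_replicate {q n : ℕ} {x : Fin n → Fin q} {S : Finset (Fin n)} {c : Fin q}
    (hx : ∀ i ∉ S, x i = c) : delWord x S = List.replicate (n - #S) c := by
  rw [delWord, List.eq_replicate_iff]
  refine ⟨by simp [card_sdiff_of_subset (subset_univ S)], ?_⟩
  simp only [List.mem_map, mem_sort, mem_sdiff, mem_univ, true_and]
  rintro _ ⟨i, hi, rfl⟩
  exact hx i hi

def unitWord (n q : ℕ) : Fin n → Fin 2 := fun i => if (i : ℕ) = q then 1 else 0

def zerosOneZeros (a b : ℕ) : List (Fin 2) := List.replicate a 0 ++ 1 :: List.replicate b 0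

section UnitWord

variable {n : ℕ} {S : Finset (Fin n)} {a b : Fin n}

theorem unitWord_apply_of_ne {i : Fin n} (h : i ≠ a) : unitWord n a i = 0 :=
  if_neg (Fin.val_injective.ne h)

theorem map_sort_unitWord_of_notMem {s : Finset (Fin n)} (ha : a ∉ s) :
    (s.sort (· ≤ ·)).map (unitWord n a) = List.replicate #s 0 := by
  rw [List.eq_replicate_iff, List.length_map, length_sort]
  simp only [List.mem_map, mem_sort, true_and]
  rintro _ ⟨i, hi, rfl⟩
  exact unitWord_apply_of_ne (ne_of_mem_of_not_mem hi ha)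

theorem delWord_unitWord_of_mem (ha : a ∈ S) :
    delWord (unitWord n a) S = List.replicate (n - #S) 0 :=
  delWord_eq_replicate fun _ hi => unitWord_apply_of_ne (ne_of_mem_of_not_mem ha hi).symm

theorem delWord_unitWord_of_notMem (ha : a ∉ S) :
    delWord (unitWord n a) S = zerosOneZeros (a - #(S ∩ Iio a)) (n - 1 - a - #(S ∩ Ioi a)) := by
  have hkept_lt : #{i ∈ univ \ S | i < a} = a - #(S ∩ Iio a) := by
    rw [← Fin.card_Iio a, ← card_sdiff]
    congr 1
    ext i
    simp [and_comm]
  have hkept_gt : #{i ∈ univ \ S | a < i} = n - 1 - a - #(S ∩ Ioi a) := by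
    rw [← Fin.card_Ioi a, ← card_sdiff]
    congr 1
    ext i
    simp [and_comm]
  rw [delWord, sort_eq_sort_filter_lt_append (by simpa using ha), List.map_append, List.map_cons,
    map_sort_unitWord_of_notMem (by simp), map_sort_unitWord_of_notMem (by simp),
    hkept_lt, hkept_gt, zerosOneZeros]
  simp [unitWord]

theorem delWord_unitWord_Icc_erase {c d : Fin n} (hcb : c ≤ b) (hbd : b ≤ d) :
    delWord (unitWord n b) ((Icc c d).erase b) = zerosOneZeros c (n - 1 - d) := by
  have hlo : (Icc c d).erase b ∩ Iio b = Ico c b := by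
    ext i; simp only [mem_inter, mem_erase, mem_Icc, mem_Iio, mem_Ico]; grind
  have hhi : (Icc c d).erase b ∩ Ioi b = Ioc b d := by
    ext i; simp only [mem_inter, mem_erase, mem_Icc, mem_Ioi, mem_Ioc]; grind
  rw [delWord_unitWord_of_notMem (by simp), hlo, hhi, Fin.card_Ico, Fin.card_Ioc]
  rw [Fin.le_def] at hcb hbd
  congr 1 <;> omega

theorem exists_delWord_unitWord_eq_of_mem (ha : a ∈ S) (b : Fin n) :
    ∃ S', #S' = #S ∧ b ∈ S' ∧ delWord (unitWord n b) S' = delWord (unitWord n a) S := by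
  obtain ⟨S', hbS', -, hcard⟩ := exists_subsuperset_card_eq
    (singleton_subset_iff.2 (mem_univ b)) (card_pos.2 ⟨a, ha⟩) (card_le_univ S)
  refine ⟨S', hcard, singleton_subset_iff.1 hbS', ?_⟩
  rw [delWord_unitWord_of_mem (singleton_subset_iff.1 hbS'), delWord_unitWord_of_mem ha, hcard]

theorem exists_delWord_unitWord_eq_of_notMem (ha : a ∉ S)
    (hlo : a - #(S ∩ Iio a) ≤ b) (hhi : b ≤ a + #(S ∩ Ioi a)) :
    ∃ c d : Fin n, (c : ℕ) = a - #(S ∩ Iio a) ∧ (d : ℕ) = a + #(S ∩ Ioi a) ∧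
      #((Icc c d).erase b) = #S ∧
      delWord (unitWord n b) ((Icc c d).erase b) = delWord (unitWord n a) S := by
  have hk : #(S ∩ Iio a) ≤ a := (card_le_card inter_subset_right).trans (Fin.card_Iio a).le
  have hm : #(S ∩ Ioi a) ≤ n - 1 - a :=
    (card_le_card inter_subset_right).trans (Fin.card_Ioi a).le
  let c : Fin n := ⟨a - #(S ∩ Iio a), (Nat.sub_le _ _).trans_lt a.isLt⟩
  let d : Fin n := ⟨a + #(S ∩ Ioi a), by omega⟩
  have hcb : c ≤ b := Fin.le_def.2 hlo
  have hbd : b ≤ d := Fin.le_def.2 hhi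
  refine ⟨c, d, rfl, rfl, ?_, ?_⟩
  · rw [card_erase_of_mem (mem_Icc.2 ⟨hcb, hbd⟩), Fin.card_Icc,
      card_eq_card_inter_Iio_add_card_inter_Ioi ha]
    dsimp only [c, d]
    omega
  · rw [delWord_unitWord_Icc_erase hcb hbd, delWord_unitWord_of_notMem ha]
    congr 1
    dsimp only [d]
    omega

variable {A : Finset (Fin n)} {t : ℕ}

theorem exists_delWord_unitWord_succ_eq (hab : (b : ℕ) = a + 1) (ha : a ∈ A) (hb : b ∈ A)
    (hS : S ∈ hittingSets (Ici a) t) :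
    ∃ S' ∈ hittingSets A t, delWord (unitWord n b) S' = delWord (unitWord n a) S := by
  obtain ⟨hSt, i, hiS, hai⟩ := mem_hittingSets.1 hS
  by_cases haS : a ∈ S
  · obtain ⟨S', hcard, hbS', hw⟩ := exists_delWord_unitWord_eq_of_mem haS b
    exact ⟨S', mem_hittingSets.2 ⟨hcard ▸ hSt, b, hbS', hb⟩, hw⟩
  · have hright : 0 < #(S ∩ Ioi a) := card_pos.2 ⟨i, mem_inter.2
      ⟨hiS, mem_Ioi.2 ((mem_Ici.1 hai).lt_of_ne (ne_of_mem_of_not_mem hiS haS).symm)⟩⟩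
    obtain ⟨c, d, hc, hd, hcard, hw⟩ :=
      exists_delWord_unitWord_eq_of_notMem haS (b := b) (by omega) (by omega)
    refine ⟨_, mem_hittingSets.2 ⟨hcard ▸ hSt, a, ?_, ha⟩, hw⟩
    simp only [mem_erase, mem_Icc, Fin.le_def, ne_eq, Fin.ext_iff]
    omega

theorem exists_delWord_unitWord_pred_eq (hab : (b : ℕ) = a + 1) (hA : A ⊆ Iic b)
    (hS : S ∈ hittingSets A t) :
    ∃ S' ∈ hittingSets (Ici a) t, delWord (unitWord n a) S' = delWord (unitWord n b) S := by
  obtain ⟨hSt, i, hiS, hiA⟩ := mem_hittingSets.1 hS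
  by_cases hbS : b ∈ S
  · obtain ⟨S', hcard, haS', hw⟩ := exists_delWord_unitWord_eq_of_mem hbS a
    exact ⟨S', mem_hittingSets.2 ⟨hcard ▸ hSt, a, haS', mem_Ici.2 le_rfl⟩, hw⟩
  · have hleft : 0 < #(S ∩ Iio b) := card_pos.2 ⟨i, mem_inter.2
      ⟨hiS, mem_Iio.2 ((mem_Iic.1 (hA hiA)).lt_of_ne (ne_of_mem_of_not_mem hiS hbS))⟩⟩
    obtain ⟨c, d, hc, hd, hcard, hw⟩ :=
      exists_delWord_unitWord_eq_of_notMem hbS (b := a) (by omega) (by omega)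
    refine ⟨_, mem_hittingSets.2 ⟨hcard ▸ hSt, b, ?_, mem_Ici.2 (Fin.le_def.2 (by omega))⟩, hw⟩
    simp only [mem_erase, mem_Icc, Fin.le_def, ne_eq, Fin.ext_iff]
    omega

theorem image_delWord_unitWord_hittingSets (hab : (b : ℕ) = a + 1) (ha : a ∈ A) (hb : b ∈ A)
    (hA : A ⊆ Iic b) (t : ℕ) :
    (hittingSets (Ici a) t).image (delWord (unitWord n a)) =
      (hittingSets A t).image (delWord (unitWord n b)) := by
  ext w
  simp only [mem_image]
  constructor
  · rintro ⟨S, hS, rfl⟩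
    exact exists_delWord_unitWord_succ_eq hab ha hb hS
  · rintro ⟨S, hS, rfl⟩
    exact exists_delWord_unitWord_pred_eq hab hA hS

end UnitWord

theorem deletion_vectors_at_most_t_tightness_general
    (t n : ℕ) (hn : 2 * t + 2 ≤ n) :
    ∃ D D' : Finset (Finset (Fin n)),
      (∀ S ∈ D, S.card ≤ t) ∧ (∀ S ∈ D', S.card ≤ t) ∧
      D.card = V₂ n t - V₂ ((n + 1) / 2 - 1) t ∧
      D'.card = V₂ n t - V₂ ((n + 1) / 2 - 1) t ∧
      D.image (delWord (fun i : Fin n => if (i : ℕ) = (n + 1) / 2 - 1 then (1 : Fin 2) else 0)) =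
        D'.image (delWord (fun i : Fin n => if (i : ℕ) = (n + 1) / 2 then (1 : Fin 2) else 0)) := by
  obtain ⟨p, hp⟩ : ∃ p, (n + 1) / 2 = p + 1 := ⟨(n + 1) / 2 - 1, by omega⟩
  rw [hp, Nat.add_sub_cancel]
  let a : Fin n := ⟨p, by omega⟩
  let b : Fin n := ⟨p + 1, by omega⟩
  refine ⟨hittingSets (Ici a) t, hittingSets (Icc ⟨n % 2, by omega⟩ b) t,
    fun S hS => (mem_hittingSets.1 hS).1, fun S hS => (mem_hittingSets.1 hS).1, ?_, ?_,
    image_delWord_unitWord_hittingSets (a := a) (b := b) rfl ?_ ?_ Icc_subset_Iic_self t⟩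
  · rw [card_hittingSets, Fintype.card_fin, Fin.card_Ici]
    congr 2
    dsimp only [a]
    omega
  · rw [card_hittingSets, Fintype.card_fin, Fin.card_Icc]
    congr 2
    dsimp only [b]
    omega
  · simp only [mem_Icc, Fin.mk_le_mk, a, b]
    omega
  · simp only [mem_Icc, Fin.mk_le_mk, b]
    omega

/-- Tightness for deletion vectors of weight at most `t`:
`x = 0^{⌈n/2⌉-1} 1 0^{⌊n/2⌋}` has its single `1` at (0-indexed) position `⌈n/2⌉ - 1 = (n+1)/2 - 1`,
and `x' = 0^{⌈n/2⌉} 1 0^{⌊n/2⌋-1}` has its single `1` at position `⌈n/2⌉ = (n+1)/2`. -/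
theorem deletion_vectors_at_most_t_tightness
    (t n : ℕ) (ht : 1 ≤ t) (hn : 2 * t + 2 ≤ n) :
    ∃ D D' : Finset (Finset (Fin n)),
      (∀ S ∈ D, S.card ≤ t) ∧ (∀ S ∈ D', S.card ≤ t) ∧
      D.card = V₂ n t - V₂ ((n + 1) / 2 - 1) t ∧
      D'.card = V₂ n t - V₂ ((n + 1) / 2 - 1) t ∧
      D.image (delWord (fun i : Fin n => if (i : ℕ) = (n + 1) / 2 - 1 then (1 : Fin 2) else 0)) =
        D'.image (delWord (fun i : Fin n => if (i : ℕ) = (n + 1) / 2 then (1 : Fin 2) else 0)) :=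
  deletion_vectors_at_most_t_tightness_general t n hn
end
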